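/- Let φ(z) = (−z² + 2z + 1)/(z² + 2z − 1), extended to ℙ¹(ℚ) = ℚ ∪ {∞} (the denominator has no rational roots; φ(∞) = −1). Then the set of rational preperiodic points of φ is exactly {0, ∞, −1, 1}, with orbit structure: 1 is a fixed point, φ(−1) = 1, φ(0) = −1, and φ(∞) = −1. -/

import Mathlib

/-!
The rational preperiodic points of `φ(z) = (−z² + 2z + 1)/(z² + 2z − 1)` are
exactly `{0, ∞, −1, 1}` with `1` fixed, `φ(−1) = 1`, `φ(0) = −1`,
`φ(∞) = −1`.

We model ℙ¹(ℚ) as `Option ℚ`, with `none` playing the role of ∞;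
the denominator has no rational roots and `φ(∞) = −1`.
-/

/-- The map `φ(z) = (−z² + 2z + 1)/(z² + 2z − 1)` on `ℙ¹(ℚ)`, with
`φ(∞) = −1`. -/
def phi13 : Option ℚ → Option ℚ
  | none => some (-1)
  | some x =>
      if x ^ 2 + 2 * x - 1 = 0 then none
      else some ((-x ^ 2 + 2 * x + 1) / (x ^ 2 + 2 * x - 1))

/-- A point is preperiodic for a self-map `f` if two distinct iterates of `f`
agree on it, i.e. its forward orbit is finite. -/
def IsPreperiodicPt {X : Type*} (f : X → X) (α : X) : Prop :=
  ∃ i j : ℕ, i < j ∧ f^[i] α = f^[j] α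

/-!
Write `x = a / b` in lowest terms; then `φ(x) = N / D` with `N = -a² + 2ab + b²` and
`D = a² + 2ab - b²`. A common factor of `N` and `D` divides both `4a³` and `4b³`, hence `4`,
and `4 ∤ N`, so the naive height `H(x) = max(|a|, b)` satisfies `max(|N|, |D|) ≤ 2 H(φ x)`. As
`N + D = 4ab` and `D - N = 2(a² - b²)`, this forces `H(φ x) > H(x)` as soon as `H(x) ≥ 3`.
Heights therefore increase strictly along the orbit of such a point, so a preperiodic point has
height at most `2`, and the seven rationals of height at most `2` are checked by hand.
-/

section Preperiodic

variable {X : Type*} {f : X → X} {x : X}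

theorem IsPreperiodicPt.apply (h : IsPreperiodicPt f x) : IsPreperiodicPt f (f x) := by
  obtain ⟨i, j, hij, hfix⟩ := h
  refine ⟨i, j, hij, ?_⟩
  rw [← Function.iterate_succ_apply, Function.iterate_succ_apply', hfix,
    ← Function.iterate_succ_apply' f j, Function.iterate_succ_apply]

theorem isPreperiodicPt_of_isFixedPt_iterate {n : ℕ} (h : Function.IsFixedPt f (f^[n] x)) :
    IsPreperiodicPt f x :=
  ⟨n, n + 1, n.lt_succ_self, by rw [Function.iterate_succ_apply', h.eq]⟩

theorem Function.Semiconj.isPreperiodicPt_iff {Y : Type*} {e : X → Y} {g : Y → Y}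
    (h : Function.Semiconj e f g) (he : e.Injective) :
    IsPreperiodicPt g (e x) ↔ IsPreperiodicPt f x := by
  simp only [IsPreperiodicPt, ← (h.iterate_right _).eq, he.eq_iff]

theorem not_isPreperiodicPt_of_height_lt {α : Type*} [Preorder α] (height : X → α) {c : α}
    (hf : ∀ y, c ≤ height y → height y < height (f y)) (hx : c ≤ height x) :
    ¬ IsPreperiodicPt f x := by
  have hc : ∀ n, c ≤ height (f^[n] x) := by
    intro n
    induction n with
    | zero => exact hx
    | succ n ih => rw [Function.iterate_succ_apply']; exact (ih.trans_lt (hf _ ih)).le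
  have hmono : StrictMono fun n => height (f^[n] x) := strictMono_nat_of_lt_succ fun n => by
    simp only [Function.iterate_succ_apply']
    exact hf _ (hc n)
  rintro ⟨i, j, hij, hfix⟩
  exact (hmono hij).ne (congrArg height hfix)

end Preperiodic

/-- `φ(a/b) = phiNum a b / phiNum b a`. -/
def phiNum (a b : ℤ) : ℤ := -a ^ 2 + 2 * a * b + b ^ 2

/-- Modulo 4, `phiNum a b = 2b² - (a - b)²` forces `a ≡ b ≡ 0 mod 2`. -/
theorem not_four_dvd_phiNum {a b : ℤ} (hab : IsCoprime a b) : ¬ 4 ∣ phiNum a b := by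
  rintro ⟨m, hm⟩
  have hsq : (a - b) ^ 2 = 2 * (b ^ 2 - 2 * m) := by rw [phiNum] at hm; linear_combination -hm
  obtain ⟨c, hc⟩ := Int.prime_two.dvd_of_dvd_pow (n := 2) ⟨_, hsq⟩
  have hb : 2 ∣ b := by
    refine Int.prime_two.dvd_of_dvd_pow (n := 2) ⟨c ^ 2 + m, ?_⟩
    rw [hc] at hsq; linarith
  have ha : 2 ∣ a := by rw [show a = b + 2 * c by linear_combination hc]; exact dvd_add hb ⟨c, rfl⟩
  exact Int.prime_two.not_isUnit (hab.isUnit_of_dvd' ha hb)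

theorem dvd_four_of_dvd_phiNum {a b k : ℤ} (hab : IsCoprime a b) (hN : k ∣ phiNum a b)
    (hD : k ∣ phiNum b a) : k ∣ 4 := by
  have ha : k ∣ 4 * a ^ 3 := by
    rw [show 4 * a ^ 3 = (b - 2 * a) * phiNum a b + (2 * a + b) * phiNum b a by
      simp only [phiNum]; ring]
    exact dvd_add (hN.mul_left _) (hD.mul_left _)
  have hb : k ∣ 4 * b ^ 3 := by
    rw [show 4 * b ^ 3 = (a + 2 * b) * phiNum a b + (a - 2 * b) * phiNum b a by
      simp only [phiNum]; ring]
    exact dvd_add (hN.mul_left _) (hD.mul_left _)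
  obtain ⟨u, v, huv⟩ := hab.pow (m := 3) (n := 3)
  rw [show (4 : ℤ) = u * (4 * a ^ 3) + v * (4 * b ^ 3) by linear_combination -4 * huv]
  exact dvd_add (ha.mul_left _) (hb.mul_left _)

theorem abs_le_two_of_dvd_phiNum {a b k : ℤ} (hab : IsCoprime a b) (hN : k ∣ phiNum a b)
    (hD : k ∣ phiNum b a) : |k| ≤ 2 := by
  have h4 := dvd_four_of_dvd_phiNum hab hN hD
  have hk : ¬ 4 ∣ k := fun h => not_four_dvd_phiNum hab (h.trans hN)
  obtain ⟨hlo, hhi⟩ := abs_le.mp (Int.le_of_dvd (by norm_num) ((abs_dvd k 4).mpr h4))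
  rw [abs_le]
  interval_cases k <;> simp_all

theorem max_lt_of_abs_phiNum_le {a b M : ℤ} (hb : 1 ≤ b) (h3 : 3 ≤ max |a| b)
    (hN : |phiNum a b| ≤ 2 * M) (hD : |phiNum b a| ≤ 2 * M) : max |a| b < M := by
  have hab : |a| * b ≤ M := by
    have h : |phiNum a b + phiNum b a| = 4 * (|a| * b) := by
      rw [show phiNum a b + phiNum b a = 4 * (a * b) by simp only [phiNum]; ring, abs_mul,
        abs_mul, abs_of_pos (show 0 < b by omega)]
      norm_num
    linarith [abs_add_le (phiNum a b) (phiNum b a)]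
  have hsq : |a ^ 2 - b ^ 2| ≤ 2 * M := by
    have h : |phiNum b a - phiNum a b| = 2 * |a ^ 2 - b ^ 2| := by
      rw [show phiNum b a - phiNum a b = 2 * (a ^ 2 - b ^ 2) by simp only [phiNum]; ring,
        abs_mul]
      norm_num
    linarith [abs_sub (phiNum b a) (phiNum a b)]
  have ha := abs_nonneg a
  have hsq' := abs_le.mp hsq
  rw [← sq_abs a] at hsq'
  rcases le_or_gt 2 b with hb2 | hb1
  · rcases le_or_gt 2 |a| with ha2 | ha1
    · exact max_lt (by nlinarith) (by nlinarith)
    · have hb3 : 3 ≤ b := by rw [max_eq_right (by omega)] at h3; exact h3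
      exact max_lt (by nlinarith) (by nlinarith)
  · have ha3 : 3 ≤ |a| := by rw [max_eq_left (by omega)] at h3; exact h3
    exact max_lt (by nlinarith) (by nlinarith)

def phi13Rat (x : ℚ) : ℚ := (-x ^ 2 + 2 * x + 1) / (x ^ 2 + 2 * x - 1)

theorem phiNum_num_den (x : ℚ) :
    (phiNum x.num x.den : ℚ) = x.den ^ 2 * (-x ^ 2 + 2 * x + 1) := by
  simp only [phiNum]; push_cast; rw [← Rat.mul_den_eq_num]; ring

theorem phiNum_den_num (x : ℚ) :
    (phiNum x.den x.num : ℚ) = x.den ^ 2 * (x ^ 2 + 2 * x - 1) := by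
  simp only [phiNum]; push_cast; rw [← Rat.mul_den_eq_num]; ring

theorem phiNum_den_num_ne_zero (x : ℚ) : phiNum x.den x.num ≠ 0 := fun h =>
  not_four_dvd_phiNum x.isCoprime_num_den.symm (h ▸ dvd_zero 4)

theorem phi13Rat_denom_ne_zero (x : ℚ) : x ^ 2 + 2 * x - 1 ≠ 0 := by
  have h := phiNum_den_num_ne_zero x
  rw [← Int.cast_ne_zero (α := ℚ), phiNum_den_num] at h
  exact right_ne_zero_of_mul h

theorem phi13Rat_eq_div (x : ℚ) :
    phi13Rat x = (phiNum x.num x.den : ℚ) / (phiNum x.den x.num : ℚ) := by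
  rw [phiNum_num_den, phiNum_den_num, mul_div_mul_left _ _ (by simp), phi13Rat]

theorem phi13_some (x : ℚ) : phi13 (some x) = some (phi13Rat x) :=
  if_neg (phi13Rat_denom_ne_zero x)

def naiveHeight (x : ℚ) : ℤ := max |x.num| x.den

/-- Clearing denominators in `φ(a/b) = phiNum a b / phiNum b a` cancels at most a factor `2`. -/
theorem abs_phiNum_le_two_mul_naiveHeight (x : ℚ) :
    |phiNum x.num x.den| ≤ 2 * naiveHeight (phi13Rat x) ∧
      |phiNum x.den x.num| ≤ 2 * naiveHeight (phi13Rat x) := by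
  obtain ⟨k, hN, hD⟩ :=
    Rat.exists_eq_mul_div_num_and_eq_mul_div_den _ (phiNum_den_num_ne_zero x)
  rw [← phi13Rat_eq_div] at hN hD
  have hk : |k| ≤ 2 := abs_le_two_of_dvd_phiNum x.isCoprime_num_den
    (hN ▸ dvd_mul_right _ _) (hD ▸ dvd_mul_right _ _)
  have hnum : |(phi13Rat x).num| ≤ naiveHeight (phi13Rat x) := le_max_left _ _
  have hden : |((phi13Rat x).den : ℤ)| ≤ naiveHeight (phi13Rat x) :=
    (abs_of_nonneg (Int.natCast_nonneg _)).trans_le (le_max_right _ _)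
  rw [hN, hD, abs_mul, abs_mul]
  exact ⟨mul_le_mul hk hnum (abs_nonneg _) zero_le_two,
    mul_le_mul hk hden (abs_nonneg _) zero_le_two⟩

theorem naiveHeight_lt_naiveHeight_phi13Rat {x : ℚ} (hx : 3 ≤ naiveHeight x) :
    naiveHeight x < naiveHeight (phi13Rat x) :=
  max_lt_of_abs_phiNum_le (by exact_mod_cast x.pos) hx
    (abs_phiNum_le_two_mul_naiveHeight x).1 (abs_phiNum_le_two_mul_naiveHeight x).2

theorem mem_of_naiveHeight_le_two {x : ℚ} (hx : naiveHeight x ≤ 2) :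
    x ∈ ({0, 1, -1, 2, -2, 1 / 2, -1 / 2} : Set ℚ) := by
  have hnum := abs_le.mp ((le_max_left _ _).trans hx)
  have hden : (x.den : ℤ) ≤ 2 := (le_max_right _ _).trans hx
  have hpos := x.pos
  rw [← Rat.num_div_den x]
  generalize x.num = n, x.den = d at *
  obtain ⟨hn₁, hn₂⟩ := hnum
  have hd : d = 1 ∨ d = 2 := by omega
  rcases hd with rfl | rfl <;> interval_cases n <;> norm_num

theorem phi13Rat_zero : phi13Rat 0 = -1 := by norm_num [phi13Rat]
theorem phi13Rat_neg_one : phi13Rat (-1) = 1 := by norm_num [phi13Rat]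
theorem phi13Rat_one : phi13Rat 1 = 1 := by norm_num [phi13Rat]

theorem not_isPreperiodicPt_phi13Rat_of_three_le {x : ℚ} (hx : 3 ≤ naiveHeight x) :
    ¬ IsPreperiodicPt phi13Rat x :=
  not_isPreperiodicPt_of_height_lt naiveHeight (fun _ => naiveHeight_lt_naiveHeight_phi13Rat) hx

/-- `±2` and `±1/2` have height `2` but are mapped to `7` or `1/7`, of height `7`. -/
theorem isPreperiodicPt_phi13Rat_iff (x : ℚ) :
    IsPreperiodicPt phi13Rat x ↔ x = 0 ∨ x = -1 ∨ x = 1 := by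
  constructor
  · intro hx
    have escapes : ∀ y, naiveHeight y = 7 → phi13Rat x = y → False := fun y hy hxy =>
      not_isPreperiodicPt_phi13Rat_of_three_le (by omega) (hxy ▸ hx.apply)
    have h7 : naiveHeight 7 = 7 := by simp [naiveHeight]
    have h17 : naiveHeight (1 / 7) = 7 := by simp [naiveHeight]; decide
    have hsmall : naiveHeight x ≤ 2 := by
      by_contra! h
      exact not_isPreperiodicPt_phi13Rat_of_three_le h hx
    rcases mem_of_naiveHeight_le_two hsmall with rfl | rfl | rfl | rfl | rfl | rfl | rfl
    · exact Or.inl rfl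
    · exact Or.inr (Or.inr rfl)
    · exact Or.inr (Or.inl rfl)
    · exact (escapes (1 / 7) h17 (by norm_num [phi13Rat])).elim
    · exact (escapes 7 h7 (by norm_num [phi13Rat])).elim
    · exact (escapes 7 h7 (by norm_num [phi13Rat])).elim
    · exact (escapes (1 / 7) h17 (by norm_num [phi13Rat])).elim
  · have fixed_one : Function.IsFixedPt phi13Rat 1 := phi13Rat_one
    rintro (rfl | rfl | rfl)
    · exact isPreperiodicPt_of_isFixedPt_iterate (n := 2) (by
        rwa [Function.iterate_succ_apply', Function.iterate_one, phi13Rat_zero, phi13Rat_neg_one])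
    · exact isPreperiodicPt_of_isFixedPt_iterate (n := 1) (by
        rwa [Function.iterate_one, phi13Rat_neg_one])
    · exact isPreperiodicPt_of_isFixedPt_iterate (n := 0) fixed_one

/-- The set of rational preperiodic points of
`φ(z) = (−z² + 2z + 1)/(z² + 2z − 1)` is exactly `{0, ∞, −1, 1}`, with orbit
structure `1` fixed, `φ(−1) = 1`, `φ(0) = −1`, `φ(∞) = −1`. -/
theorem phi13_preperiodic_points :
    {α : Option ℚ | IsPreperiodicPt phi13 α} =
        ({some 0, none, some (-1), some 1} : Set (Option ℚ)) ∧
      phi13 (some 1) = some 1 ∧ phi13 (some (-1)) = some 1 ∧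
      phi13 (some 0) = some (-1) ∧ phi13 none = some (-1) := by
  have hsemiconj : Function.Semiconj some phi13Rat phi13 := fun x => (phi13_some x).symm
  have hone : phi13 (some 1) = some 1 := by rw [phi13_some, phi13Rat_one]
  have hneg_one : phi13 (some (-1)) = some 1 := by rw [phi13_some, phi13Rat_neg_one]
  refine ⟨?_, hone, hneg_one, by rw [phi13_some, phi13Rat_zero], rfl⟩
  ext (_ | x)
  · refine iff_of_true (isPreperiodicPt_of_isFixedPt_iterate (n := 2) ?_) (by simp)
    rwa [Function.iterate_succ_apply', Function.iterate_one, show phi13 none = some (-1) from rfl,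
      hneg_one]
  · rw [Set.mem_ofPred_eq, hsemiconj.isPreperiodicPt_iff (Option.some_injective _),
      isPreperiodicPt_phi13Rat_iff]
    simp only [Set.mem_insert_iff, Set.mem_singleton_iff, Option.some_inj, reduceCtorEq]
    tauto
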